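/- arXiv:2112.15048 — 2 statements merged into one kernel-verified Lean document; each statement's English description precedes it below -/
import Mathlib

section
/- Let K be a field of characteristic 2 and let M = ⁅x_{i_0}^{a_0}, x_{i_1}^{a_1}, …, x_{i_n}^{a_n}⁆ (n ≥ 1) be a left-normed monomial with M ∉ T_ℤ(U_1). Then there exists a permutation σ of {0, 1, …, n} such that a_{σ(0)} is odd, a_{σ(k)} is even for every 1 ≤ k ≤ n, a_{σ(1)} ≤ a_{σ(2)} ≤ ⋯ ≤ a_{σ(n)}, and M − ⁅x_{i_{σ(0)}}^{a_{σ(0)}}, x_{i_{σ(1)}}^{a_{σ(1)}}, …, x_{i_{σ(n)}}^{a_{σ(n)}}⁆ ∈ ⟨S⟩_{T_ℤ}, where S = {⁅x_1^a, x_2^b⁆ : a, b ∈ ℤ, a ≡ b (mod 2)}. -/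
/-!
With `e_a := t^{a+1} d/dt` one has `⁅e_a, e_b⁆ = (b - a) e_{a+b}` in `U_1`, which in characteristic
two vanishes exactly when `a + b` is even. Hence every partial degree sum `a_0 + ⋯ + a_k` (`k ≥ 1`)
of a monomial that is not a graded identity is odd: `a_0 + a_1` is odd and `a_2, …, a_n` are even.
Since `⁅x, y⁆ = ⁅y, x⁆` in characteristic two, the first two letters may be swapped to put the odd
one in front. All later letters then have even degree, and modulo the `T_ℤ`-ideal of same-parity
brackets the Jacobi identity `⁅u, y, x⁆ - ⁅u, x, y⁆ = ⁅u, ⁅y, x⁆⁆` lets them be sorted.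
-/

open FreeLieAlgebra LaurentPolynomial

/-- The free Lie algebra `L` over `K` on the generators `x_i^a`, `(a, i) : ℤ × ℕ`;
the generator `x_i^a := FreeLieAlgebra.of K (a, i)` has ℤ-degree `a`. -/
abbrev FL (K : Type*) [Field K] := FreeLieAlgebra K (ℤ × ℕ)

variable (K : Type*) [Field K]

/-- Iterated Lie brackets of generators whose ℤ-degrees sum to `a`. -/
inductive IsHomBracket : FL K → ℤ → Prop
  | gen (a : ℤ) (i : ℕ) : IsHomBracket (FreeLieAlgebra.of K (a, i)) a
  | bracket {u v : FL K} {a b : ℤ} :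
      IsHomBracket u a → IsHomBracket v b → IsHomBracket ⁅u, v⁆ (a + b)

/-- The homogeneous component `L_a` of the free Lie algebra. -/
noncomputable def homComp (a : ℤ) : Submodule K (FL K) :=
  Submodule.span K {w : FL K | IsHomBracket K w a}

/-- A graded endomorphism of the free Lie algebra. -/
def IsGradedEndo (φ : FL K →ₗ⁅K⁆ FL K) : Prop :=
  ∀ (a : ℤ) (i : ℕ), φ (FreeLieAlgebra.of K (a, i)) ∈ homComp K a

/-- A `T_ℤ`-ideal: a Lie ideal stable under all graded endomorphisms. -/
def IsTIdeal (I : LieIdeal K (FL K)) : Prop :=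
  ∀ φ : FL K →ₗ⁅K⁆ FL K, IsGradedEndo K φ → ∀ x ∈ I, φ x ∈ I

/-- `⟨S⟩_{T_ℤ}`, the smallest `T_ℤ`-ideal containing `S` (as a set of elements). -/
def TSpan (S : Set (FL K)) : Set (FL K) :=
  {x : FL K | ∀ I : LieIdeal K (FL K), IsTIdeal K I → S ⊆ (I : Set (FL K)) → x ∈ I}

/-- `U_1`, the Lie algebra of `K`-linear derivations of `K[t, t⁻¹]`. -/
abbrev U1 (K : Type*) [Field K] := Derivation K (LaurentPolynomial K) (LaurentPolynomial K)

/-- Evaluation of a derivation of `K[t,t⁻¹]` at `t`, as a linear map. -/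
noncomputable def evalT : U1 K →ₗ[K] LaurentPolynomial K where
  toFun D := D (T 1)
  map_add' D E := by simp
  map_smul' c D := by simp

/-- The homogeneous component `(U_1)_a = {D | D t ∈ K • t^{a+1}}` of the canonical
ℤ-grading of `U_1`. -/
noncomputable def U1comp (a : ℤ) : Submodule K (U1 K) :=
  (Submodule.span K ({T (a + 1)} : Set (LaurentPolynomial K))).comap (evalT K)

/-- `T_ℤ(U_1)`, the set of ℤ-graded identities of `U_1`. -/
def TU1 : Set (FL K) :=
  {f : FL K | ∀ v : ℤ × ℕ → U1 K, (∀ (a : ℤ) (i : ℕ), v (a, i) ∈ U1comp K a) →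
    FreeLieAlgebra.lift K v f = 0}

/-- The left-normed monomial `⁅x_{idx 0}^{a 0}, x_{idx 1}^{a 1}, …, x_{idx n}^{a n}⁆`
in the free Lie algebra, on `n + 1` generators. -/
noncomputable def lnMonFin : ∀ n : ℕ, (Fin (n + 1) → ℤ) → (Fin (n + 1) → ℕ) → FL K
  | 0, a, idx => FreeLieAlgebra.of K (a 0, idx 0)
  | n + 1, a, idx =>
      ⁅lnMonFin n (fun k => a k.castSucc) (fun k => idx k.castSucc),
        FreeLieAlgebra.of K (a (Fin.last (n + 1)), idx (Fin.last (n + 1)))⁆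

/-- Iterated Lie brackets of generators in which each generator `x_i^a` occurs
exactly `d (a, i)` times. -/
inductive IsMonOfMultiDeg : FL K → ((ℤ × ℕ) →₀ ℕ) → Prop
  | gen (p : ℤ × ℕ) : IsMonOfMultiDeg (FreeLieAlgebra.of K p) (Finsupp.single p 1)
  | bracket {u v : FL K} {d e : (ℤ × ℕ) →₀ ℕ} :
      IsMonOfMultiDeg u d → IsMonOfMultiDeg v e → IsMonOfMultiDeg ⁅u, v⁆ (d + e)

/-- `f` is multihomogeneous of multidegree `d`. -/
def IsMultiHom (f : FL K) (d : (ℤ × ℕ) →₀ ℕ) : Prop :=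
  f ∈ Submodule.span K {w : FL K | IsMonOfMultiDeg K w d}

section LaurentDerivation

variable {R : Type*} [CommRing R]

theorem derivation_apply_T (D : Derivation R R[T;T⁻¹] R[T;T⁻¹]) (m : ℤ) :
    D (T m) = (m : R[T;T⁻¹]) * T (m - 1) * D (T 1) := by
  have step (m : ℤ) : D (T (m + 1)) = T m * D (T 1) + T 1 * D (T m) := by
    rw [T_add, Derivation.leibniz, smul_eq_mul, smul_eq_mul]
  induction m using Int.induction_on with
  | zero => simp [T_zero]
  | succ k ih =>
    have hT : (T 1 * T (k - 1) : R[T;T⁻¹]) = T k := by rw [← T_add]; ring_nf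
    rw [step, ih, add_sub_cancel_right]
    push_cast
    linear_combination (k * D (T 1)) * hT
  | pred k ih =>
    have hunit : (T (-1) * T 1 : R[T;T⁻¹]) = 1 := by rw [← T_add]; simp [T_zero]
    have hT : (T (-1) * T (-k - 1) : R[T;T⁻¹]) = T (-k - 1 - 1) := by rw [← T_add]; ring_nf
    have hstep := step (-k - 1)
    rw [sub_add_cancel, ih, show -(k : ℤ) - 1 = -k - 1 by ring] at hstep
    push_cast at hstep ⊢
    linear_combination (-D (T (-k - 1))) * hunit - T (-1) * hstep + ((-k - 1) * D (T 1)) * hT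

theorem derivation_eq_zero_of_apply_T_one {D : Derivation R R[T;T⁻¹] R[T;T⁻¹]}
    (h : D (T 1) = 0) : D = 0 := by
  ext f
  induction f using LaurentPolynomial.induction_on' with
  | add p q hp hq => simp [hp, hq]
  | C_mul_T n c =>
    rw [Derivation.leibniz, derivation_apply_T, h, C_eq_algebraMap, Derivation.map_algebraMap]
    simp

theorem derivation_lie_apply_T_one {D E : Derivation R R[T;T⁻¹] R[T;T⁻¹]} {a b : ℤ} {c d : R}
    (hD : D (T 1) = c • T (a + 1)) (hE : E (T 1) = d • T (b + 1)) :
    ⁅D, E⁆ (T 1) = (c * d * (b - a : ℤ)) • T (a + b + 1) := by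
  have hTa : (T b * T (a + 1) : R[T;T⁻¹]) = T (a + b + 1) := by rw [← T_add]; ring_nf
  have hTb : (T a * T (b + 1) : R[T;T⁻¹]) = T (a + b + 1) := by rw [← T_add]; ring_nf
  rw [Derivation.commutator_apply, hD, hE, Derivation.map_smul, Derivation.map_smul,
    derivation_apply_T D (b + 1), derivation_apply_T E (a + 1), hD, hE, add_sub_cancel_right,
    add_sub_cancel_right]
  simp only [smul_eq_C_mul, map_mul, map_intCast]
  push_cast
  linear_combination
    (C c * C d * ((b : R[T;T⁻¹]) + 1)) * hTa - (C c * C d * ((a : R[T;T⁻¹]) + 1)) * hTb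

end LaurentDerivation

section GradedIdentities

variable {K}

theorem mem_U1comp_iff {D : U1 K} {a : ℤ} : D ∈ U1comp K a ↔ ∃ c : K, D (T 1) = c • T (a + 1) := by
  simp only [U1comp, Submodule.mem_comap, Submodule.mem_span_singleton, eq_comm]
  rfl

theorem lie_mem_U1comp {D E : U1 K} {a b : ℤ} (hD : D ∈ U1comp K a) (hE : E ∈ U1comp K b) :
    ⁅D, E⁆ ∈ U1comp K (a + b) := by
  obtain ⟨c, hc⟩ := mem_U1comp_iff.mp hD
  obtain ⟨d, hd⟩ := mem_U1comp_iff.mp hE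
  exact mem_U1comp_iff.mpr ⟨_, derivation_lie_apply_T_one hc hd⟩

theorem lie_eq_zero_of_mem_U1comp [CharP K 2] {D E : U1 K} {a b : ℤ} (hD : D ∈ U1comp K a)
    (hE : E ∈ U1comp K b) (hab : Even (a + b)) : ⁅D, E⁆ = 0 := by
  obtain ⟨c, hc⟩ := mem_U1comp_iff.mp hD
  obtain ⟨d, hd⟩ := mem_U1comp_iff.mp hE
  have h2 : ((b - a : ℤ) : K) = 0 := by
    rw [CharP.intCast_eq_zero_iff K 2, Nat.cast_ofNat, ← even_iff_two_dvd,
      show b - a = (a + b) - 2 * a by ring]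
    exact hab.sub (even_two_mul a)
  refine derivation_eq_zero_of_apply_T_one ?_
  rw [derivation_lie_apply_T_one hc hd, h2, mul_zero, zero_smul]

theorem lift_lnMonFin_mem_U1comp {v : ℤ × ℕ → U1 K} (hv : ∀ a i, v (a, i) ∈ U1comp K a)
    (n : ℕ) (a : Fin (n + 1) → ℤ) (idx : Fin (n + 1) → ℕ) :
    lift K v (lnMonFin K n a idx) ∈ U1comp K (∑ i, a i) := by
  induction n with
  | zero => simpa [lnMonFin] using hv (a 0) (idx 0)
  | succ n ih =>
    rw [lnMonFin, LieHom.map_lie, lift_of_apply, Fin.sum_univ_castSucc]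
    exact lie_mem_U1comp (ih _ _) (hv _ _)

theorem lnMonFin_mem_TU1_of_even_sum [CharP K 2] {n : ℕ} {a : Fin (n + 2) → ℤ}
    {idx : Fin (n + 2) → ℕ} (h : Even (∑ i, a i)) : lnMonFin K (n + 1) a idx ∈ TU1 K := by
  intro v hv
  rw [lnMonFin, LieHom.map_lie, lift_of_apply]
  refine lie_eq_zero_of_mem_U1comp (lift_lnMonFin_mem_U1comp hv _ _ _) (hv _ _) ?_
  rwa [← Fin.sum_univ_castSucc]

theorem lnMonFin_succ_mem_TU1_of_mem {n : ℕ} {a : Fin (n + 2) → ℤ} {idx : Fin (n + 2) → ℕ}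
    (h : lnMonFin K n (fun k => a k.castSucc) (fun k => idx k.castSucc) ∈ TU1 K) :
    lnMonFin K (n + 1) a idx ∈ TU1 K := by
  intro v hv
  rw [lnMonFin, LieHom.map_lie, h v hv, zero_lie]

theorem parity_of_lnMonFin_not_mem_TU1 [CharP K 2] :
    ∀ {n : ℕ} {a : Fin (n + 2) → ℤ} {idx : Fin (n + 2) → ℕ}, lnMonFin K (n + 1) a idx ∉ TU1 K →
      Odd (a 0 + a 1) ∧ ∀ k, k ≠ 0 → k ≠ 1 → Even (a k)
  | 0, a, idx, h => by
    have hodd := Int.not_even_iff_odd.mp (mt lnMonFin_mem_TU1_of_even_sum h)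
    refine ⟨by simpa [Fin.sum_univ_two] using hodd, fun k hk0 hk1 => ?_⟩
    fin_cases k <;> simp_all
  | n + 1, a, idx, h => by
    have hinit := mt lnMonFin_succ_mem_TU1_of_mem h
    obtain ⟨h01, hev⟩ := parity_of_lnMonFin_not_mem_TU1 hinit
    have hsum := Int.not_even_iff_odd.mp (mt lnMonFin_mem_TU1_of_even_sum h)
    have hinit_sum := Int.not_even_iff_odd.mp (mt lnMonFin_mem_TU1_of_even_sum hinit)
    rw [Fin.sum_univ_castSucc] at hsum
    have hlast : Even (a (Fin.last _)) := (Int.odd_add.mp hsum).mp hinit_sum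
    refine ⟨by simpa using h01, fun k hk0 hk1 => ?_⟩
    induction k using Fin.lastCases with
    | last => exact hlast
    | cast j => exact hev j (by rintro rfl; simp at hk0) (by rintro rfl; simp at hk1)

end GradedIdentities

section LeftNormed

variable {R L : Type*} [CommRing R] [LieRing L] [LieAlgebra R L]

def leftNormed (u : L) (l : List L) : L :=
  l.foldl (fun w x => ⁅w, x⁆) u

theorem leftNormed_cons (u x : L) (l : List L) : leftNormed u (x :: l) = leftNormed ⁅u, x⁆ l :=
  rfl

theorem leftNormed_append_singleton (u x : L) (l : List L) :
    leftNormed u (l ++ [x]) = ⁅leftNormed u l, x⁆ :=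
  List.foldl_append ..

theorem leftNormed_sub_mem (I : LieIdeal R L) (l : List L) :
    ∀ {u u' : L}, u - u' ∈ I → leftNormed u l - leftNormed u' l ∈ I := by
  induction l with
  | nil => exact id
  | cons x l ih =>
    intro u u' h
    exact ih (by rw [← sub_lie]; exact lie_mem_left R L I _ _ h)

theorem leftNormed_sub_mem_of_perm (I : LieIdeal R L) {l l' : List L} (hl : l.Perm l')
    (h : ∀ x ∈ l, ∀ y ∈ l, ⁅x, y⁆ ∈ I) (u : L) : leftNormed u l - leftNormed u l' ∈ I := by
  induction hl generalizing u with
  | nil => simp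
  | cons x _ ih => exact ih (fun y hy z hz => h y (.tail _ hy) z (.tail _ hz)) _
  | swap x y t =>
    refine leftNormed_sub_mem I t ?_
    have hjacobi : ⁅⁅u, y⁆, x⁆ - ⁅⁅u, x⁆, y⁆ = ⁅u, ⁅y, x⁆⁆ := by
      rw [leibniz_lie u y x, ← lie_skew ⁅u, x⁆ y]
      abel
    rw [hjacobi]
    exact I.lie_mem (h y (by simp) x (by simp))
  | trans h₁ _ ih₁ ih₂ =>
    have := add_mem (ih₁ h u) (ih₂ (fun x hx y hy => h x (h₁.mem_iff.mpr hx) y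
      (h₁.mem_iff.mpr hy)) u)
    rwa [sub_add_sub_cancel] at this

theorem leftNormed_cons_comm (R : Type*) [CommRing R] [CharP R 2] [LieAlgebra R L]
    (x y : L) (l : List L) : leftNormed y (x :: l) = leftNormed x (y :: l) := by
  rw [leftNormed_cons, leftNormed_cons, ← lie_skew, ← neg_one_smul R ⁅x, y⁆, CharTwo.neg_eq,
    one_smul]

end LeftNormed

section NormalForm

variable {K}

theorem lnMonFin_eq_leftNormed (n : ℕ) (a : Fin (n + 1) → ℤ) (idx : Fin (n + 1) → ℕ) :
    lnMonFin K n a idx =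
      leftNormed (of K (a 0, idx 0)) (List.ofFn fun k : Fin n => of K (a k.succ, idx k.succ)) := by
  induction n with
  | zero => rfl
  | succ n ih =>
    rw [lnMonFin, ih, List.ofFn_succ', List.concat_eq_append, leftNormed_append_singleton]
    simp only [Fin.castSucc_zero, Fin.succ_castSucc, Fin.succ_last]

theorem lnMonFin_comp_swap_zero_one [CharP K 2] (n : ℕ) (a : Fin (n + 2) → ℤ)
    (idx : Fin (n + 2) → ℕ) :
    lnMonFin K (n + 1) (a ∘ Equiv.swap 0 1) (idx ∘ Equiv.swap 0 1) = lnMonFin K (n + 1) a idx := by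
  have hfix (k : Fin n) : Equiv.swap (0 : Fin (n + 2)) 1 k.succ.succ = k.succ.succ :=
    Equiv.swap_apply_of_ne_of_ne (Fin.succ_ne_zero _) (Fin.succ_succ_ne_one k)
  simp only [lnMonFin_eq_leftNormed, List.ofFn_succ, Function.comp_apply, hfix,
    Fin.succ_zero_eq_one, Equiv.swap_apply_left, Equiv.swap_apply_right]
  exact leftNormed_cons_comm K _ _ _

theorem exists_perm_odd_head [CharP K 2] {n : ℕ} {a : Fin (n + 2) → ℤ} (idx : Fin (n + 2) → ℕ)
    (h01 : Odd (a 0 + a 1)) (hev : ∀ k, k ≠ 0 → k ≠ 1 → Even (a k)) :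
    ∃ τ : Equiv.Perm (Fin (n + 2)),
      lnMonFin K (n + 1) (a ∘ τ) (idx ∘ τ) = lnMonFin K (n + 1) a idx ∧
      Odd (a (τ 0)) ∧ ∀ k, k ≠ 0 → Even (a (τ k)) := by
  by_cases h0 : Odd (a 0)
  · refine ⟨1, rfl, h0, fun k hk0 => ?_⟩
    by_cases hk1 : k = 1
    · subst hk1; exact (Int.odd_add.mp h01).mp h0
    · exact hev k hk0 hk1
  · refine ⟨Equiv.swap 0 1, lnMonFin_comp_swap_zero_one n a idx, ?_, fun k hk0 => ?_⟩
    · simpa using (Int.odd_add'.mp h01).mpr (Int.not_odd_iff_even.mp h0)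
    · by_cases hk1 : k = 1
      · subst hk1; simpa using Int.not_odd_iff_even.mp h0
      · rw [Equiv.swap_apply_of_ne_of_ne hk0 hk1]; exact hev k hk0 hk1

theorem exists_perm_fixing_zero_sorting_tail {α : Type*} [LinearOrder α] {n : ℕ}
    (f : Fin (n + 1) → α) :
    ∃ ρ : Equiv.Perm (Fin (n + 1)), ρ 0 = 0 ∧ ∀ k l, k ≠ 0 → k ≤ l → f (ρ k) ≤ f (ρ l) := by
  set π := Tuple.sort fun i : Fin n => f i.succ
  refine ⟨Equiv.Perm.decomposeFin.symm (0, π), by simp, fun k l hk hkl => ?_⟩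
  obtain ⟨i, rfl⟩ := Fin.exists_succ_eq.mpr hk
  obtain ⟨j, rfl⟩ := Fin.exists_succ_eq.mpr (Fin.pos_iff_ne_zero.mp ((Fin.succ_pos i).trans_le hkl))
  simpa using Tuple.monotone_sort (fun i : Fin n => f i.succ) (Fin.succ_le_succ_iff.mp hkl)

theorem lnMonFin_sub_comp_mem {I : LieIdeal K (FL K)} {n : ℕ} {a : Fin (n + 1) → ℤ}
    {idx : Fin (n + 1) → ℕ} {σ : Equiv.Perm (Fin (n + 1))} (hσ : σ 0 = 0)
    (h : ∀ k l, k ≠ 0 → l ≠ 0 → ⁅of K (a k, idx k), of K (a l, idx l)⁆ ∈ I) :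
    lnMonFin K n a idx - lnMonFin K n (a ∘ σ) (idx ∘ σ) ∈ I := by
  set g : Fin (n + 1) → FL K := fun k => of K (a k, idx k)
  have hperm : (List.ofFn fun k : Fin n => g k.succ).Perm
      (List.ofFn fun k : Fin n => g (σ k.succ)) := by
    have := σ.ofFn_comp_perm g
    rw [List.ofFn_succ, List.ofFn_succ] at this
    exact (List.Perm.cons_inv (by simpa only [Function.comp_apply, hσ] using this)).symm
  rw [lnMonFin_eq_leftNormed, lnMonFin_eq_leftNormed]
  simp only [Function.comp_apply, hσ]
  refine leftNormed_sub_mem_of_perm I hperm ?_ _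
  simp only [List.mem_ofFn, forall_exists_index, forall_apply_eq_imp_iff]
  exact fun k l => h _ _ (Fin.succ_ne_zero k) (Fin.succ_ne_zero l)

theorem isGradedEndo_lift_reindex (g : ℕ → ℕ) :
    IsGradedEndo K (lift K fun p : ℤ × ℕ => of K (p.1, g p.2)) := fun a i => by
  rw [lift_of_apply]
  exact Submodule.subset_span (IsHomBracket.gen a (g i))

theorem IsTIdeal.lie_mem_of_modEq {I : LieIdeal K (FL K)} (hI : IsTIdeal K I)
    (hS : ∀ a b : ℤ, a ≡ b [ZMOD 2] → ⁅of K (a, 1), of K (b, 2)⁆ ∈ I) {a b : ℤ}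
    (hab : a ≡ b [ZMOD 2]) (i j : ℕ) : ⁅of K (a, i), of K (b, j)⁆ ∈ I := by
  simpa using hI _ (isGradedEndo_lift_reindex fun m => if m = 1 then i else j) _ (hS a b hab)

end NormalForm

/-- Lemma 3.3: a left-normed monomial that is not a graded identity of `U_1` can be
rewritten, modulo the `T_ℤ`-ideal generated by the same-parity brackets, with first
variable of odd degree and the remaining variables of even, nondecreasing, degrees. -/
theorem monomial_normal_form [CharP K 2] (n : ℕ) (hn : 1 ≤ n)
    (a : Fin (n + 1) → ℤ) (idx : Fin (n + 1) → ℕ)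
    (hM : lnMonFin K n a idx ∉ TU1 K) :
    ∃ σ : Equiv.Perm (Fin (n + 1)),
      Odd (a (σ 0)) ∧
      (∀ k : Fin (n + 1), k ≠ 0 → Even (a (σ k))) ∧
      (∀ k l : Fin (n + 1), k ≠ 0 → k ≤ l → a (σ k) ≤ a (σ l)) ∧
      lnMonFin K n a idx - lnMonFin K n (a ∘ σ) (idx ∘ σ) ∈
        TSpan K {f : FL K | ∃ a b : ℤ, a ≡ b [ZMOD 2] ∧
      f = ⁅FreeLieAlgebra.of K (a, 1), FreeLieAlgebra.of K (b, 2)⁆} := by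
  obtain ⟨m, rfl⟩ := Nat.exists_eq_add_of_le' hn
  obtain ⟨h01, hev⟩ := parity_of_lnMonFin_not_mem_TU1 hM
  obtain ⟨τ, hτ, hτ0, hτev⟩ := exists_perm_odd_head (K := K) idx h01 hev
  obtain ⟨ρ, hρ0, hρ⟩ := exists_perm_fixing_zero_sorting_tail (a ∘ τ)
  have hρne (k : Fin (m + 2)) (hk : k ≠ 0) : ρ k ≠ 0 := hρ0 ▸ ρ.injective.ne hk
  refine ⟨ρ.trans τ, by simpa [hρ0] using hτ0, fun k hk => hτev _ (hρne k hk), hρ, ?_⟩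
  intro I hI hS
  rw [← hτ]
  refine lnMonFin_sub_comp_mem hρ0 fun k l hk hl => hI.lie_mem_of_modEq
    (fun a b hab => hS ⟨a, b, hab, rfl⟩) ?_ _ _
  exact (Int.even_iff.mp (hτev k hk)).trans (Int.even_iff.mp (hτev l hl)).symm
end

section
/- Let K be a field. For each n ∈ ℤ there exists a unique K-linear derivation e_n of LaurentPolynomial K with e_n t = t^{n+1}, and the family (e_n)_{n ∈ ℤ} is a basis of the K-module Derivation K (LaurentPolynomial K) (LaurentPolynomial K). (The elements e_n = t^{n+1} d/dt, n ∈ ℤ, form a basis of U_1.) -/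
/-!
Since `t` is a unit and `K[t, t⁻¹]` is generated by `t` and `t⁻¹`, a derivation `D` is determined
by `D t`: the Leibniz rule forces `D t⁻¹ = -t⁻² D t`. Conversely `a • d/dt` takes the value `a` at
`t`, where `d/dt` is defined on the monomial basis. Hence `D ↦ D t` is a linear isomorphism from
the derivations onto `K[t, t⁻¹]`, and `e_n` is the preimage of the basis vector `t^{n+1}`.
-/

open LaurentPolynomial

namespace LaurentPolynomial

variable {R : Type*} [CommRing R]

noncomputable def derivativeₗ : R[T;T⁻¹] →ₗ[R] R[T;T⁻¹] :=
  (AddMonoidAlgebra.basis ℤ R).constr R fun n => n • T (n - 1)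

@[simp]
theorem derivativeₗ_T (n : ℤ) : derivativeₗ (T n : R[T;T⁻¹]) = n • T (n - 1) :=
  (AddMonoidAlgebra.basis ℤ R).constr_basis R _ n

theorem derivativeₗ_T_mul_T (m n : ℤ) :
    derivativeₗ (T m * T n : R[T;T⁻¹]) =
      T m * derivativeₗ (T n) + derivativeₗ (T m) * T n := by
  simp only [← T_add, derivativeₗ_T, mul_smul_comm, smul_mul_assoc]
  rw [← add_sub_assoc, sub_add_eq_add_sub, add_smul, add_comm (m • _)]

theorem derivativeₗ_mul (p q : R[T;T⁻¹]) :
    derivativeₗ (p * q) = p * derivativeₗ q + derivativeₗ p * q := by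
  have h_bilin := LinearMap.ext_basis (B := (LinearMap.mul R R[T;T⁻¹]).compr₂ derivativeₗ)
    (B' := (LinearMap.mul R R[T;T⁻¹]).compl₂ derivativeₗ +
      LinearMap.mul R R[T;T⁻¹] ∘ₗ derivativeₗ)
    (AddMonoidAlgebra.basis ℤ R) (AddMonoidAlgebra.basis ℤ R) fun m n => by
      simp only [LinearMap.compr₂_apply, LinearMap.add_apply, LinearMap.compl₂_apply,
        LinearMap.comp_apply, LinearMap.mul_apply']
      exact derivativeₗ_T_mul_T m n
  exact LinearMap.congr_fun₂ h_bilin p q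

noncomputable def derivative : Derivation R R[T;T⁻¹] R[T;T⁻¹] :=
  Derivation.mk' derivativeₗ fun p q => by
    rw [derivativeₗ_mul, smul_eq_mul, smul_eq_mul, mul_comm q]

@[simp]
theorem derivative_T (n : ℤ) : derivative (T n : R[T;T⁻¹]) = n • T (n - 1) :=
  derivativeₗ_T n

theorem T_neg_one_mul_T_one : (T (-1) * T 1 : R[T;T⁻¹]) = 1 := by
  rw [← T_add, neg_add_cancel, T_zero]

theorem adjoin_T_one_T_neg_one : Algebra.adjoin R {(T 1 : R[T;T⁻¹]), T (-1)} = ⊤ := by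
  have hT_one : (T 1 : R[T;T⁻¹]) ∈ Algebra.adjoin R {T 1, T (-1)} :=
    Algebra.subset_adjoin (by simp)
  have hT_neg : (T (-1) : R[T;T⁻¹]) ∈ Algebra.adjoin R {T 1, T (-1)} :=
    Algebra.subset_adjoin (by simp)
  refine eq_top_iff.2 fun f _ =>
    f.induction_on (fun a => ?_) add_mem (fun n a h => ?_) fun n a h => ?_
  · exact C_eq_algebraMap a ▸ Subalgebra.algebraMap_mem _ a
  · rw [T_add, ← mul_assoc]
    exact mul_mem h hT_one
  · rw [T_sub, ← mul_assoc]
    exact mul_mem h hT_neg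

variable {A : Type*} [AddCommGroup A] [Module R[T;T⁻¹] A] [Module R A]

@[ext]
theorem derivation_ext {D₁ D₂ : Derivation R R[T;T⁻¹] A} (h : D₁ (T 1) = D₂ (T 1)) :
    D₁ = D₂ := by
  refine Derivation.ext_of_adjoin_eq_top _ adjoin_T_one_T_neg_one ?_
  rintro _ (rfl | rfl)
  · exact h
  · rw [D₁.leibniz_of_mul_eq_one T_neg_one_mul_T_one,
      D₂.leibniz_of_mul_eq_one T_neg_one_mul_T_one, h]

variable [IsScalarTower R R[T;T⁻¹] A]

variable (R) in
noncomputable def mkDerivation (a : A) : Derivation R R[T;T⁻¹] A :=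
  (LinearMap.toSpanSingleton R[T;T⁻¹] A a).compDer derivative

@[simp]
theorem mkDerivation_T_one (a : A) : mkDerivation R a (T 1) = a := by
  simp [mkDerivation]

variable (R A) in
noncomputable def mkDerivationEquiv : A ≃ₗ[R] Derivation R R[T;T⁻¹] A :=
  LinearEquiv.symm
    { toFun D := D (T 1)
      invFun := mkDerivation R
      map_add' _ _ := rfl
      map_smul' _ _ := rfl
      left_inv _ := derivation_ext (mkDerivation_T_one _)
      right_inv := mkDerivation_T_one }

@[simp]
theorem mkDerivationEquiv_apply (a : A) : mkDerivationEquiv R A a = mkDerivation R a := rfl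

end LaurentPolynomial

variable (K : Type*) [Field K]

/-- The elements `e_n = t^{n+1} d/dt`, `n ∈ ℤ`, are well defined (unique derivations with
`e_n t = t^{n+1}`) and form a `K`-basis of `U_1 = Derivation K K[t,t⁻¹] K[t,t⁻¹]`. -/
theorem exists_basis_en :
    (∀ n : ℤ, ∃! D : Derivation K (LaurentPolynomial K) (LaurentPolynomial K),
      D (T 1) = T (n + 1)) ∧
    ∃ B : Module.Basis ℤ K (Derivation K (LaurentPolynomial K) (LaurentPolynomial K)),
      ∀ n : ℤ, (B n) (T 1) = T (n + 1) :=
  ⟨fun n => (mkDerivationEquiv K K[T;T⁻¹]).symm.bijective.existsUnique (T (n + 1)),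
    ⟨((AddMonoidAlgebra.basis ℤ K).reindex (Equiv.subRight 1)).map (mkDerivationEquiv K _),
      fun n => by
        rw [Module.Basis.map_apply, Module.Basis.reindex_apply, AddMonoidAlgebra.basis_apply,
          mkDerivationEquiv_apply]
        exact mkDerivation_T_one _⟩⟩
end
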